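/- Full-state lower quadratic bound following from Lemma 2: for every x ∈ ℝⁿ and every piecewise continuous φ : [-h,0) → ℝʳ, v(x, φ) ≥ (min{m_x, m_u}/2) (‖x‖² + ‖φ‖²), where m_u = e^{-σh} λ_min(W''), m_x = λ_min( (V⁻¹ + m_u⁻¹ G)⁻¹ ), G = ∫_{-h}^0 Q(θ) Q(θ)ᵀ dθ, and ‖φ‖² = ∫_{-h}^0 ‖φ(θ)‖² dθ. -/

import Mathlib

/-!
Write `z = x + ∫ Q φ`, `S = V⁻¹ + m_u⁻¹ G` and `w = S⁻¹ x`. Two Young inequalities,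
`2 w⬝z ≤ w⬝V⁻¹w + z⬝Vz` and `-2 w⬝∫Qφ ≤ m_u⁻¹ w⬝Gw + m_u ‖φ‖²` (the latter integrated from
`2 (Qᵀw)⬝φ ≤ m_u⁻¹ |Qᵀw|² + m_u |φ|²`), add up to `x⬝S⁻¹x = w⬝x ≤ z⬝Vz + m_u ‖φ‖²`, hence
`m_x ‖x‖² ≤ z⬝Vz + m_u ‖φ‖²`. As `e^{σθ} ≥ e^{-σh}` on `[-h, 0]`, the integral term of `v`
dominates `m_u ‖φ‖²`, and averaging the two bounds gives the claim. All integrands are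
piecewise continuous, since `Q` is.
-/

open scoped Matrix.Norms.L2Operator
open Matrix MeasureTheory

noncomputable def lamMin {n : ℕ} (M : Matrix (Fin n) (Fin n) ℝ) : ℝ := sInf (spectrum ℝ M)

noncomputable def lamMax {n : ℕ} (M : Matrix (Fin n) (Fin n) ℝ) : ℝ := sSup (spectrum ℝ M)

def PiecewiseContinuousOn {E : Type*} [NormedAddCommGroup E] (f : ℝ → E) (s : Set ℝ) : Prop :=
  ∃ t : Finset ℝ, (∀ x ∈ s \ (t : Set ℝ), ContinuousWithinAt f s x) ∧ ∃ C, ∀ x ∈ s, ‖f x‖ ≤ C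

open Set

section Spectrum

variable {n : ℕ} {M : Matrix (Fin n) (Fin n) ℝ}

theorem lamMin_nonneg (hM : M.PosSemidef) : 0 ≤ lamMin M :=
  Real.sInf_nonneg fun _ ha => (posSemidef_iff_isHermitian_and_spectrum_nonneg.1 hM).2 ha

theorem lamMax_nonneg (hM : M.PosSemidef) : 0 ≤ lamMax M :=
  Real.sSup_nonneg fun _ ha => (posSemidef_iff_isHermitian_and_spectrum_nonneg.1 hM).2 ha

theorem posSemidef_sub_lamMin_smul_one (hM : M.IsHermitian) : (M - lamMin M • 1).PosSemidef := by
  refine posSemidef_iff_isHermitian_and_spectrum_nonneg.2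
    ⟨hM.sub (isHermitian_one.smul (IsSelfAdjoint.all _)), ?_⟩
  rw [← Algebra.algebraMap_eq_smul_one, ← spectrum.sub_singleton_eq]
  rintro _ ⟨a, ha, _, rfl, rfl⟩
  exact sub_nonneg.2 (csInf_le finite_real_spectrum.bddBelow ha)

theorem lamMin_mul_dotProduct_self_le (hM : M.IsHermitian) (x : Fin n → ℝ) :
    lamMin M * (x ⬝ᵥ x) ≤ x ⬝ᵥ M *ᵥ x := by
  have := (posSemidef_sub_lamMin_smul_one hM).dotProduct_mulVec_nonneg x
  simp only [star_trivial, sub_mulVec, smul_mulVec, one_mulVec, dotProduct_sub,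
    dotProduct_smul, smul_eq_mul] at this
  linarith

end Spectrum

section Young

variable {ι : Type*} [Fintype ι]

theorem dotProduct_self_nonneg (v : ι → ℝ) : 0 ≤ v ⬝ᵥ v := by
  simpa using dotProduct_star_self_nonneg v

theorem two_mul_dotProduct_le_inv_mul_add_mul {c : ℝ} (hc : 0 < c) (u v : ι → ℝ) :
    2 * (u ⬝ᵥ v) ≤ c⁻¹ * (u ⬝ᵥ u) + c * (v ⬝ᵥ v) := by
  have h := dotProduct_self_nonneg (u - c • v)
  simp only [sub_dotProduct, dotProduct_sub, smul_dotProduct, dotProduct_smul, smul_eq_mul,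
    dotProduct_comm v u] at h
  rw [← mul_le_mul_iff_of_pos_left hc, mul_add, mul_inv_cancel_left₀ hc.ne']
  linarith

theorem dotProduct_mul_transpose_mulVec {κ : Type*} [Fintype κ] (M : Matrix ι κ ℝ) (y : ι → ℝ) :
    y ⬝ᵥ (M * Mᵀ) *ᵥ y = Mᵀ *ᵥ y ⬝ᵥ Mᵀ *ᵥ y := by
  rw [← mulVec_mulVec, dotProduct_mulVec, ← mulVec_transpose]

theorem Matrix.IsHermitian.dotProduct_mulVec_comm {V : Matrix ι ι ℝ} (hV : V.IsHermitian)
    (u v : ι → ℝ) : u ⬝ᵥ V *ᵥ v = v ⬝ᵥ V *ᵥ u := by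
  rw [dotProduct_mulVec, ← mulVec_transpose, (isHermitian_iff_isSymm.1 hV).eq, dotProduct_comm]

theorem Matrix.PosDef.two_mul_dotProduct_le_inv_add [DecidableEq ι] {V : Matrix ι ι ℝ}
    (hV : V.PosDef) (w z : ι → ℝ) : 2 * (w ⬝ᵥ z) ≤ w ⬝ᵥ V⁻¹ *ᵥ w + z ⬝ᵥ V *ᵥ z := by
  set u := V⁻¹ *ᵥ w
  have hw : w = V *ᵥ u := by
    rw [mulVec_mulVec, mul_nonsing_inv _ (isUnit_iff_ne_zero.2 hV.det_pos.ne'), one_mulVec]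
  have h := hV.posSemidef.dotProduct_mulVec_nonneg (u - z)
  simp only [star_trivial, mulVec_sub, dotProduct_sub, sub_dotProduct,
    hV.isHermitian.dotProduct_mulVec_comm z u] at h
  rw [hw, dotProduct_comm (V *ᵥ u), dotProduct_comm (V *ᵥ u),
    hV.isHermitian.dotProduct_mulVec_comm z u]
  linarith

end Young

/- `q` plays the role of `∫ Q φ` and `d` that of `‖φ‖²`; `hq` is the Young inequality
supplied by `G = ∫ Q Qᵀ`. -/
theorem lamMin_inv_add_smul_mul_dotProduct_self_le {n : ℕ} {V G : Matrix (Fin n) (Fin n) ℝ}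
    (hV : V.PosDef) (hG : G.PosSemidef) {c d : ℝ} (hc : 0 < c) (x q : Fin n → ℝ)
    (hq : ∀ y, 2 * (y ⬝ᵥ q) ≤ c⁻¹ * (y ⬝ᵥ G *ᵥ y) + c * d) :
    lamMin (V⁻¹ + c⁻¹ • G)⁻¹ * (x ⬝ᵥ x) ≤ (x + q) ⬝ᵥ V *ᵥ (x + q) + c * d := by
  set S := V⁻¹ + c⁻¹ • G
  have hS : S.PosDef := hV.inv.add_posSemidef (hG.smul (inv_nonneg.2 hc.le))
  set w := S⁻¹ *ᵥ x
  have hSw : S *ᵥ w = x := by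
    rw [mulVec_mulVec, mul_nonsing_inv _ (isUnit_iff_ne_zero.2 hS.det_pos.ne'), one_mulVec]
  have hwx : w ⬝ᵥ x = w ⬝ᵥ V⁻¹ *ᵥ w + c⁻¹ * (w ⬝ᵥ G *ᵥ w) := by
    conv_lhs => rw [← hSw]
    rw [add_mulVec, smul_mulVec, dotProduct_add, dotProduct_smul, smul_eq_mul]
  have hmin := lamMin_mul_dotProduct_self_le hS.inv.isHermitian x
  have hyoung := hV.two_mul_dotProduct_le_inv_add w (x + q)
  have hcross := hq (-w)
  rw [dotProduct_comm x (S⁻¹ *ᵥ x)] at hmin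
  rw [dotProduct_add] at hyoung
  simp only [neg_dotProduct, mulVec_neg, dotProduct_neg, neg_neg] at hcross
  linarith

section Integral

variable {α : Type*} [MeasurableSpace α] {μ : Measure α}

namespace LinearMap

variable {E F : Type*} [NormedAddCommGroup E] [NormedSpace ℝ E] [FiniteDimensional ℝ E]
  [NormedAddCommGroup F] [NormedSpace ℝ F] (L : E →ₗ[ℝ] F) {f : α → E}

theorem integrable_comp_of_finiteDimensional (hf : Integrable f μ) :
    Integrable (fun a => L (f a)) μ :=
  L.toContinuousLinearMap.integrable_comp hf

theorem integral_comp_comm_of_finiteDimensional [CompleteSpace F] (hf : Integrable f μ) :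
    ∫ a, L (f a) ∂μ = L (∫ a, f a ∂μ) :=
  L.toContinuousLinearMap.integral_comp_comm hf

end LinearMap

variable {ι κ : Type*} [Fintype ι] [Fintype κ]

theorem integrable_dotProduct (y : ι → ℝ) {f : α → ι → ℝ} (hf : Integrable f μ) :
    Integrable (fun a => y ⬝ᵥ f a) μ :=
  (dotProductBilin ℝ ℝ y).integrable_comp_of_finiteDimensional hf

theorem dotProduct_integral (y : ι → ℝ) {f : α → ι → ℝ} (hf : Integrable f μ) :
    y ⬝ᵥ ∫ a, f a ∂μ = ∫ a, y ⬝ᵥ f a ∂μ :=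
  ((dotProductBilin ℝ ℝ y).integral_comp_comm_of_finiteDimensional hf).symm

variable [DecidableEq κ]

theorem integrable_mulVec (y : κ → ℝ) {F : α → Matrix ι κ ℝ} (hF : Integrable F μ) :
    Integrable (fun a => F a *ᵥ y) μ :=
  ((mulVecBilin ℝ ℝ).flip y).integrable_comp_of_finiteDimensional hF

theorem integral_mulVec (y : κ → ℝ) {F : α → Matrix ι κ ℝ} (hF : Integrable F μ) :
    (∫ a, F a ∂μ) *ᵥ y = ∫ a, F a *ᵥ y ∂μ :=
  (((mulVecBilin ℝ ℝ).flip y).integral_comp_comm_of_finiteDimensional hF).symm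

theorem dotProduct_integral_mulVec (x : ι → ℝ) (y : κ → ℝ) {F : α → Matrix ι κ ℝ}
    (hF : Integrable F μ) : x ⬝ᵥ (∫ a, F a ∂μ) *ᵥ y = ∫ a, x ⬝ᵥ F a *ᵥ y ∂μ := by
  rw [integral_mulVec y hF, dotProduct_integral x (integrable_mulVec y hF)]

theorem integral_mul_left {l : Type*} [Fintype l] (X : Matrix l ι ℝ) {F : α → Matrix ι κ ℝ}
    (hF : Integrable F μ) : ∫ a, X * F a ∂μ = X * ∫ a, F a ∂μ :=
  (mulLeftLinearMap κ ℝ X).integral_comp_comm_of_finiteDimensional hF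

theorem integral_transpose [DecidableEq ι] {F : α → Matrix ι κ ℝ} (hF : Integrable F μ) :
    (∫ a, F a ∂μ)ᵀ = ∫ a, (F a)ᵀ ∂μ :=
  ((transposeLinearEquiv _ _ ℝ ℝ).toLinearMap.integral_comp_comm_of_finiteDimensional hF).symm

end Integral

section Gram

variable {α : Type*} [MeasurableSpace α] {μ : Measure α} {ι κ : Type*} [Fintype ι] [Fintype κ]
  [DecidableEq ι] {Q : α → Matrix ι κ ℝ}

theorem dotProduct_integral_mul_transpose_mulVec (hQ : Integrable (fun a => Q a * (Q a)ᵀ) μ)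
    (y : ι → ℝ) :
    y ⬝ᵥ (∫ a, Q a * (Q a)ᵀ ∂μ) *ᵥ y = ∫ a, (Q a)ᵀ *ᵥ y ⬝ᵥ (Q a)ᵀ *ᵥ y ∂μ := by
  simp_rw [dotProduct_integral_mulVec y y hQ, dotProduct_mul_transpose_mulVec]

theorem posSemidef_integral_mul_transpose (hQ : Integrable (fun a => Q a * (Q a)ᵀ) μ) :
    (∫ a, Q a * (Q a)ᵀ ∂μ).PosSemidef := by
  refine .of_dotProduct_mulVec_nonneg ?_ fun y => ?_
  · rw [isHermitian_iff_isSymm, IsSymm, integral_transpose hQ]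
    simp_rw [transpose_mul, transpose_transpose]
  · rw [star_trivial, dotProduct_integral_mul_transpose_mulVec hQ]
    exact integral_nonneg fun a => dotProduct_self_nonneg _

theorem two_mul_dotProduct_integral_mulVec_le (hQ : Integrable (fun a => Q a * (Q a)ᵀ) μ)
    {φ : α → κ → ℝ} (hQφ : Integrable (fun a => Q a *ᵥ φ a) μ)
    (hφ : Integrable (fun a => φ a ⬝ᵥ φ a) μ) {c : ℝ} (hc : 0 < c) (y : ι → ℝ) :
    2 * (y ⬝ᵥ ∫ a, Q a *ᵥ φ a ∂μ) ≤
      c⁻¹ * (y ⬝ᵥ (∫ a, Q a * (Q a)ᵀ ∂μ) *ᵥ y) + c * ∫ a, φ a ⬝ᵥ φ a ∂μ := by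
  have hQy : Integrable (fun a => (Q a)ᵀ *ᵥ y ⬝ᵥ (Q a)ᵀ *ᵥ y) μ := by
    simpa only [dotProduct_mul_transpose_mulVec] using
      integrable_dotProduct y (integrable_mulVec y hQ)
  rw [dotProduct_integral y hQφ, dotProduct_integral_mul_transpose_mulVec hQ,
    ← integral_const_mul, ← integral_const_mul, ← integral_const_mul,
    ← integral_add (hQy.const_mul _) (hφ.const_mul _)]
  refine integral_mono ((integrable_dotProduct y hQφ).const_mul _)
    ((hQy.const_mul _).add (hφ.const_mul _)) fun a => ?_
  rw [dotProduct_mulVec, ← mulVec_transpose]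
  exact two_mul_dotProduct_le_inv_mul_add_mul hc _ _

end Gram

namespace PiecewiseContinuousOn

variable {E F G : Type*} [NormedAddCommGroup E] [NormedAddCommGroup F] [NormedAddCommGroup G]
  {f : ℝ → E} {s t : Set ℝ}

theorem mono (hf : PiecewiseContinuousOn f s) (hts : t ⊆ s) : PiecewiseContinuousOn f t := by
  obtain ⟨u, hcont, C, hC⟩ := hf
  exact ⟨u, fun x hx => (hcont x ⟨hts hx.1, hx.2⟩).mono hts, C, fun x hx => hC x (hts hx)⟩

theorem congr (hf : PiecewiseContinuousOn f s) {g : ℝ → E} (hfg : EqOn f g s) :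
    PiecewiseContinuousOn g s := by
  obtain ⟨u, hcont, C, hC⟩ := hf
  exact ⟨u, fun x hx => (hcont x hx).congr (fun y hy => (hfg hy).symm) (hfg hx.1).symm, C,
    fun x hx => hfg hx ▸ hC x hx⟩

theorem comp₂ [ProperSpace E] [ProperSpace F] (hf : PiecewiseContinuousOn f s) {g : ℝ → F}
    (hg : PiecewiseContinuousOn g s) {b : E → F → G} (hb : Continuous (Function.uncurry b)) :
    PiecewiseContinuousOn (fun x => b (f x) (g x)) s := by
  obtain ⟨u, hfc, Cf, hCf⟩ := hf
  obtain ⟨v, hgc, Cg, hCg⟩ := hg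
  obtain ⟨C, hC⟩ := ((isCompact_closedBall (0 : E) Cf).prod
    (isCompact_closedBall (0 : F) Cg)).exists_bound_of_continuousOn hb.continuousOn
  refine ⟨u ∪ v, fun x ⟨hxs, hx⟩ => ?_, C, fun x hx => hC (f x, g x)
    ⟨mem_closedBall_zero_iff.2 (hCf x hx), mem_closedBall_zero_iff.2 (hCg x hx)⟩⟩
  rw [Finset.coe_union, mem_union, not_or] at hx
  exact hb.continuousAt.comp_continuousWithinAt ((hfc x ⟨hxs, hx.1⟩).prodMk (hgc x ⟨hxs, hx.2⟩))

theorem add [ProperSpace E] (hf : PiecewiseContinuousOn f s) {g : ℝ → E}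
    (hg : PiecewiseContinuousOn g s) : PiecewiseContinuousOn (fun x => f x + g x) s :=
  hf.comp₂ hg continuous_add

theorem finset_sum [ProperSpace E] {ι : Type*} (u : Finset ι) {f : ι → ℝ → E}
    (hf : ∀ i ∈ u, PiecewiseContinuousOn (f i) s) :
    PiecewiseContinuousOn (fun x => ∑ i ∈ u, f i x) s := by
  classical
  induction u using Finset.induction_on with
  | empty => exact ⟨∅, fun x hx => continuousWithinAt_const, 0, by simp⟩
  | insert i u hi ih =>
    simp_rw [Finset.sum_insert hi]
    exact (hf i (Finset.mem_insert_self i u)).add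
      (ih fun j hj => hf j (Finset.mem_insert_of_mem hj))

theorem aestronglyMeasurable (hf : PiecewiseContinuousOn f s) (hs : MeasurableSet s) :
    AEStronglyMeasurable f (volume.restrict s) := by
  obtain ⟨u, hcont, -⟩ := hf
  have hae : s =ᵐ[volume] s \ (u : Set ℝ) :=
    (sdiff_null_ae_eq_self (u.countable_toSet.measure_zero volume)).symm
  rw [Measure.restrict_congr_set hae]
  exact ContinuousOn.aestronglyMeasurable (fun x hx => (hcont x hx).mono sdiff_subset)
    (hs.diff u.measurableSet)

theorem integrableOn (hf : PiecewiseContinuousOn f s) (hs : MeasurableSet s)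
    (hs' : volume s ≠ ⊤) : IntegrableOn f s := by
  have hmeas := hf.aestronglyMeasurable hs
  obtain ⟨-, -, C, hC⟩ := hf
  exact (integrableOn_const hs').mono' hmeas
    ((ae_restrict_iff' hs).2 (.of_forall hC))

theorem integrableOn_Ioc {a b : ℝ} (hf : PiecewiseContinuousOn f (Ico a b)) :
    IntegrableOn f (Ioc a b) :=
  ((integrableOn_Icc_iff_integrableOn_Ico (f := f)).2
    (hf.integrableOn measurableSet_Ico measure_Ico_lt_top.ne)).mono_set Ioc_subset_Icc_self

end PiecewiseContinuousOn

theorem ContinuousOn.piecewiseContinuousOn {E : Type*} [NormedAddCommGroup E] {f : ℝ → E}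
    {s : Set ℝ} (hf : ContinuousOn f s) (hs : IsCompact s) : PiecewiseContinuousOn f s :=
  ⟨∅, fun x hx => hf x hx.1, hs.exists_bound_of_continuousOn hf⟩

theorem Continuous.piecewiseContinuousOn_ite_le {E : Type*} [NormedAddCommGroup E] {g : ℝ → E}
    (hg : Continuous g) {s : Set ℝ} (hs : IsCompact s) (c : ℝ) :
    PiecewiseContinuousOn (fun x => if c ≤ x then g x else 0) s := by
  obtain ⟨C, hC⟩ := hs.exists_bound_of_continuousOn hg.continuousOn
  refine ⟨{c}, fun x hx => ?_, max C 0, fun x hx => ?_⟩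
  · have hxc : x ≠ c := by simpa using hx.2
    refine ContinuousAt.continuousWithinAt ?_
    rcases hxc.lt_or_gt with hlt | hgt
    · exact continuousAt_const.congr
        (Filter.eventually_of_mem (Iio_mem_nhds hlt) fun y hy => (if_neg (not_le.2 hy)).symm)
    · exact hg.continuousAt.congr
        (Filter.eventually_of_mem (Ioi_mem_nhds hgt) fun y hy => (if_pos hy.le).symm)
  · dsimp only
    split_ifs
    · exact (hC x hx).trans (le_max_left _ _)
    · simp

section DelayKernel

variable {ι κ : Type*} [Fintype ι] [DecidableEq ι] (A : Matrix ι ι ℝ)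

theorem continuous_exp_smul : Continuous fun t : ℝ => NormedSpace.exp (t • A) :=
  (continuous_iff_continuousAt.2 fun _ => (NormedSpace.exp_analytic (𝕂 := ℝ) _).continuousAt).comp
    (continuous_id.smul continuous_const)

theorem exp_sub_smul_mul (τ θ : ℝ) (M : Matrix ι κ ℝ) :
    NormedSpace.exp ((τ - θ) • A) * M =
      NormedSpace.exp ((-θ) • A) * (NormedSpace.exp (τ • A) * M) := by
  rw [← Matrix.mul_assoc,
    ← Matrix.exp_add_of_commute _ _ (((Commute.refl A).smul_left _).smul_right _),
    ← add_smul, neg_add_eq_sub]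

theorem continuousOn_setIntegral_exp_sub_smul_mul [Fintype κ] [DecidableEq κ] {a : ℝ}
    {B : ℝ → Matrix ι κ ℝ} (hB : PiecewiseContinuousOn B (Icc a 0)) :
    ContinuousOn (fun θ => ∫ τ in Ioc a θ, NormedSpace.exp ((τ - θ) • A) * B τ) (Iic 0) := by
  set k := fun τ => NormedSpace.exp (τ • A) * B τ
  have hk : IntegrableOn k (Icc a 0) :=
    (((continuous_exp_smul A).continuousOn.piecewiseContinuousOn isCompact_Icc).comp₂ hB
      (continuous_fst.matrix_mul continuous_snd)).integrableOn measurableSet_Icc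
      measure_Icc_lt_top.ne
  have hk' : IntegrableOn ((Ioc a 0).indicator k) (Iic 0) :=
    ((integrable_indicator_iff measurableSet_Ioc).2 (hk.mono_set Ioc_subset_Icc_self)).integrableOn
  -- for `θ ≤ 0` the integral is `exp (-θ • A)` times a primitive of the integrable `1_(a,0] k`
  refine ((continuous_fst.matrix_mul continuous_snd).comp_continuousOn
    (((continuous_exp_smul A).comp continuous_neg).continuousOn.prodMk
      hk'.continuousOn_Iic_primitive_Iic)).congr fun θ hθ => ?_
  simp only [Function.comp_apply]
  rw [setIntegral_indicator measurableSet_Ioc, Iic_inter_Ioc_of_le hθ,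
    ← integral_mul_left _ (hk.mono_set (Ioc_subset_Icc_self.trans (Icc_subset_Icc_right hθ)))]
  simp_rw [exp_sub_smul_mul A _ θ, k]

theorem piecewiseContinuousOn_delayKernel [Fintype κ] [DecidableEq κ] {D : Type*} [Fintype D]
    (B : D → Matrix ι κ ℝ) (hd : D → ℝ) {a : ℝ} {Bint : ℝ → Matrix ι κ ℝ}
    (hBint : PiecewiseContinuousOn Bint (Icc a 0)) (h : ℝ) :
    PiecewiseContinuousOn (fun θ =>
      (∑ i, if -hd i ≤ θ then NormedSpace.exp ((-hd i - θ) • A) * B i else 0)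
        + ∫ τ in Ioc a θ, NormedSpace.exp ((τ - θ) • A) * Bint τ) (Icc (-h) 0) :=
  (PiecewiseContinuousOn.finset_sum _ fun _ _ =>
    (((continuous_exp_smul A).comp (continuous_const.sub continuous_id)).matrix_mul
      continuous_const).piecewiseContinuousOn_ite_le isCompact_Icc _).add
  (((continuousOn_setIntegral_exp_sub_smul_mul A hBint).mono
    Icc_subset_Iic_self).piecewiseContinuousOn isCompact_Icc)

end DelayKernel

theorem lamMin_inv_add_smul_integral_mul_dotProduct_self_le {n r : ℕ}
    {Q : ℝ → Matrix (Fin n) (Fin r) ℝ} {φ : ℝ → Fin r → ℝ} {a b : ℝ}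
    (hQ : PiecewiseContinuousOn Q (Ico a b)) (hφ : PiecewiseContinuousOn φ (Ico a b))
    {V : Matrix (Fin n) (Fin n) ℝ} (hV : V.PosDef) {c : ℝ} (hc : 0 < c) (x : Fin n → ℝ) :
    lamMin (V⁻¹ + c⁻¹ • ∫ θ in Ioc a b, Q θ * (Q θ)ᵀ)⁻¹ * (x ⬝ᵥ x) ≤
      (x + ∫ θ in Ioc a b, Q θ *ᵥ φ θ) ⬝ᵥ V *ᵥ (x + ∫ θ in Ioc a b, Q θ *ᵥ φ θ)
        + c * ∫ θ in Ioc a b, φ θ ⬝ᵥ φ θ := by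
  have hQQ := (hQ.comp₂ hQ (b := fun M N => M * Nᵀ)
    (continuous_fst.matrix_mul continuous_snd.matrix_transpose)).integrableOn_Ioc
  have hQφ := (hQ.comp₂ hφ (b := (· *ᵥ ·))
    (continuous_fst.matrix_mulVec continuous_snd)).integrableOn_Ioc
  have hφφ := (hφ.comp₂ hφ (b := (· ⬝ᵥ ·))
    (continuous_fst.dotProduct continuous_snd)).integrableOn_Ioc
  exact lamMin_inv_add_smul_mul_dotProduct_self_le hV (posSemidef_integral_mul_transpose hQQ) hc x
    _ (two_mul_dotProduct_integral_mulVec_le hQQ hQφ hφφ hc)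

theorem exp_neg_mul_lamMin_mul_integral_le_integral_exp_mul {r : ℕ} {φ : ℝ → Fin r → ℝ}
    {h : ℝ} (hφ : PiecewiseContinuousOn φ (Ico (-h) 0)) {W : Matrix (Fin r) (Fin r) ℝ}
    (hW : W.PosSemidef) {σ : ℝ} (hσ : 0 ≤ σ) :
    Real.exp (-σ * h) * lamMin W * ∫ θ in Ioc (-h) 0, φ θ ⬝ᵥ φ θ ≤
      ∫ θ in Ioc (-h) 0, Real.exp (σ * θ) * (φ θ ⬝ᵥ W *ᵥ φ θ) := by
  have hexp : PiecewiseContinuousOn (fun θ => Real.exp (σ * θ)) (Ico (-h) 0) :=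
    ((by fun_prop : Continuous fun θ => Real.exp (σ * θ)).continuousOn.piecewiseContinuousOn
      isCompact_Icc).mono Ico_subset_Icc_self
  have hφφ := (hφ.comp₂ hφ (b := (· ⬝ᵥ ·))
    (continuous_fst.dotProduct continuous_snd)).integrableOn_Ioc
  have hφWφ := (hexp.comp₂ hφ (b := fun c v => c * (v ⬝ᵥ W *ᵥ v))
    (continuous_fst.mul (continuous_snd.dotProduct
      (continuous_const.matrix_mulVec continuous_snd)))).integrableOn_Ioc
  rw [← integral_const_mul]
  refine setIntegral_mono_on (hφφ.const_mul _) hφWφ measurableSet_Ioc fun θ hθ => ?_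
  rw [mul_assoc]
  exact mul_le_mul (Real.exp_le_exp.2 (by nlinarith [hθ.1]))
    (lamMin_mul_dotProduct_self_le hW.isHermitian _)
    (mul_nonneg (lamMin_nonneg hW) (dotProduct_self_nonneg _)) (Real.exp_pos _).le

theorem lyapunov_functional_lower_bound_full_general
    {n r N : ℕ}
    (A : Matrix (Fin n) (Fin n) ℝ)
    (B : Fin N → Matrix (Fin n) (Fin r) ℝ)
    (hd : Fin N → ℝ)
    (hint : ℝ) (hint_nonneg : 0 ≤ hint)
    (Bint : ℝ → Matrix (Fin n) (Fin r) ℝ)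
    (hBint : PiecewiseContinuousOn Bint (Set.Icc (-hint) 0))
    (h : ℝ) (hh2 : hint ≤ h)
    (Q : ℝ → Matrix (Fin n) (Fin r) ℝ)
    (hQ : ∀ θ ∈ Set.Icc (-h) 0, Q θ =
      (∑ i : Fin N, if -hd i ≤ θ then NormedSpace.exp ((-hd i - θ) • A) * B i else 0)
      + ∫ τ in Set.Ioc (-hint) θ, NormedSpace.exp ((τ - θ) • A) * Bint τ)
    (W1 : Matrix (Fin n) (Fin n) ℝ) (hW1 : W1.PosDef)
    (W2 : Matrix (Fin r) (Fin r) ℝ) (hW2 : W2.PosDef)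
    (V : Matrix (Fin n) (Fin n) ℝ) (hV : V.PosDef)
    (σ : ℝ) (hσ : σ = lamMin W1 / lamMax V)
    (mu : ℝ) (hmu : mu = Real.exp (-σ * h) * lamMin W2)
    (G : Matrix (Fin n) (Fin n) ℝ) (hG : G = ∫ θ in (-h)..0, Q θ * (Q θ)ᵀ)
    (mx : ℝ) (hmx : mx = lamMin ((V⁻¹ + mu⁻¹ • G)⁻¹)) :
    ∀ (x : Fin n → ℝ) (φ : ℝ → Fin r → ℝ),
      PiecewiseContinuousOn φ (Set.Ico (-h) 0) →
      (x + ∫ θ in (-h)..0, (Q θ).mulVec (φ θ)) ⬝ᵥ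
          V.mulVec (x + ∫ θ in (-h)..0, (Q θ).mulVec (φ θ))
        + ∫ θ in (-h)..0, Real.exp (σ * θ) * (φ θ ⬝ᵥ W2.mulVec (φ θ))
      ≥ (min mx mu / 2) * (x ⬝ᵥ x + ∫ θ in (-h)..0, φ θ ⬝ᵥ φ θ) := by
  intro x φ hφ
  have hh : -h ≤ 0 := by linarith
  simp only [intervalIntegral.integral_of_le hh] at hG ⊢
  have hzVz := hV.posSemidef.dotProduct_mulVec_nonneg (x + ∫ θ in Ioc (-h) 0, Q θ *ᵥ φ θ)
  rw [star_trivial] at hzVz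
  have hφφ : 0 ≤ ∫ θ in Ioc (-h) 0, φ θ ⬝ᵥ φ θ := integral_nonneg fun θ => dotProduct_self_nonneg _
  have hφWφ : 0 ≤ ∫ θ in Ioc (-h) 0, Real.exp (σ * θ) * (φ θ ⬝ᵥ W2 *ᵥ φ θ) :=
    integral_nonneg fun θ => mul_nonneg (Real.exp_pos _).le
      (by simpa using hW2.posSemidef.dotProduct_mulVec_nonneg (φ θ))
  rcases le_or_gt (min mx mu) 0 with hm | hm
  · nlinarith [dotProduct_self_nonneg x]
  have hmu0 : 0 < mu := hm.trans_le (min_le_right _ _)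
  have hσ0 : 0 ≤ σ := hσ ▸ div_nonneg (lamMin_nonneg hW1.posSemidef) (lamMax_nonneg hV.posSemidef)
  have hQpc : PiecewiseContinuousOn Q (Ico (-h) 0) :=
    ((piecewiseContinuousOn_delayKernel A B hd hBint h).congr fun θ hθ => (hQ θ hθ).symm).mono
      Ico_subset_Icc_self
  have hx := hmx ▸ hG ▸ lamMin_inv_add_smul_integral_mul_dotProduct_self_le hQpc hφ hV hmu0 x
  have hu := hmu ▸ exp_neg_mul_lamMin_mul_integral_le_integral_exp_mul hφ hW2.posSemidef hσ0
  nlinarith [mul_le_mul_of_nonneg_right (min_le_left mx mu) (dotProduct_self_nonneg x),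
    mul_le_mul_of_nonneg_right (min_le_right mx mu) hφφ]

/-- Full-state lower quadratic bound following from Lemma 2:
`v(x,φ) ≥ (min{m_x, m_u}/2) (‖x‖² + ‖φ‖²)`. -/
theorem lyapunov_functional_lower_bound_full
    {n r N : ℕ}
    (A : Matrix (Fin n) (Fin n) ℝ)
    (B : Fin N → Matrix (Fin n) (Fin r) ℝ)
    (hd : Fin N → ℝ) (hd_nonneg : ∀ i, 0 ≤ hd i)
    (hint : ℝ) (hint_nonneg : 0 ≤ hint)
    (Bint : ℝ → Matrix (Fin n) (Fin r) ℝ)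
    (hBint : PiecewiseContinuousOn Bint (Set.Icc (-hint) 0))
    (h : ℝ) (hh1 : ∀ i, hd i ≤ h) (hh2 : hint ≤ h)
    (Q : ℝ → Matrix (Fin n) (Fin r) ℝ)
    (hQ : ∀ θ ∈ Set.Icc (-h) 0, Q θ =
      (∑ i : Fin N, if -hd i ≤ θ then NormedSpace.exp ((-hd i - θ) • A) * B i else 0)
      + ∫ τ in Set.Ioc (-hint) θ, NormedSpace.exp ((τ - θ) • A) * Bint τ)
    (F : Matrix (Fin r) (Fin n) ℝ)
    (W1 : Matrix (Fin n) (Fin n) ℝ) (hW1 : W1.PosDef)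
    (W2 : Matrix (Fin r) (Fin r) ℝ) (hW2 : W2.PosDef)
    (V : Matrix (Fin n) (Fin n) ℝ) (hV : V.PosDef)
    (hLyap : (A + Q 0 * F)ᵀ * V + V * (A + Q 0 * F) = -(W1 + (2 : ℝ) • (Fᵀ * W2 * F)))
    (σ : ℝ) (hσ : σ = lamMin W1 / lamMax V)
    (mu : ℝ) (hmu : mu = Real.exp (-σ * h) * lamMin W2)
    (G : Matrix (Fin n) (Fin n) ℝ) (hG : G = ∫ θ in (-h)..0, Q θ * (Q θ)ᵀ)
    (mx : ℝ) (hmx : mx = lamMin ((V⁻¹ + mu⁻¹ • G)⁻¹)) :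
    ∀ (x : Fin n → ℝ) (φ : ℝ → Fin r → ℝ),
      PiecewiseContinuousOn φ (Set.Ico (-h) 0) →
      (x + ∫ θ in (-h)..0, (Q θ).mulVec (φ θ)) ⬝ᵥ
          V.mulVec (x + ∫ θ in (-h)..0, (Q θ).mulVec (φ θ))
        + ∫ θ in (-h)..0, Real.exp (σ * θ) * (φ θ ⬝ᵥ W2.mulVec (φ θ))
      ≥ (min mx mu / 2) * (x ⬝ᵥ x + ∫ θ in (-h)..0, φ θ ⬝ᵥ φ θ) :=
  lyapunov_functional_lower_bound_full_general A B hd hint hint_nonneg Bint hBint h hh2 Q hQ W1 hW1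
    W2 hW2 V hV σ hσ mu hmu G hG mx hmx
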